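/- arXiv:1902.02775 — 6 statements merged into one kernel-verified Lean document; each statement's English description precedes it below -/
import Mathlib

section
/- For all positive reals u, v, one has (u - v)(log u - log v) ≥ 4(√u - √v)². -/
lemma sinh_le_mul_cosh (t : ℝ) (ht : 0 ≤ t) : Real.sinh t ≤ t * Real.cosh t := by
  have h : ∀ x ∈ Set.Ici (0:ℝ), 0 ≤ deriv (fun y => y * Real.cosh y - Real.sinh y) x := by
    intro x hx
    have : deriv (fun y => y * Real.cosh y - Real.sinh y) x = x * Real.sinh x := by
      have h1 : HasDerivAt (fun y : ℝ => y * Real.cosh y - Real.sinh y)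
          (1 * Real.cosh x + x * Real.sinh x - Real.cosh x) x := by
        exact ((hasDerivAt_id x).mul (Real.hasDerivAt_cosh x)).sub (Real.hasDerivAt_sinh x)
      rw [h1.deriv]; ring
    rw [this]
    have hx' : (0:ℝ) ≤ x := hx
    apply mul_nonneg hx'
    rw [Real.sinh_eq]
    have := Real.exp_le_exp.mpr (by linarith : -x ≤ x)
    linarith
  have hmono : MonotoneOn (fun y => y * Real.cosh y - Real.sinh y) (Set.Ici (0:ℝ)) := by
    apply monotoneOn_of_deriv_nonneg (convex_Ici 0)
    · exact (Continuous.sub (continuous_id.mul Real.continuous_cosh) Real.continuous_sinh).continuousOn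
    · intro x hx
      exact (((hasDerivAt_id x).mul (Real.hasDerivAt_cosh x)).sub (Real.hasDerivAt_sinh x)).differentiableAt.differentiableWithinAt
    · intro x hx
      exact h x (interior_subset hx)
  have := hmono (Set.self_mem_Ici) (Set.mem_Ici.mpr ht) ht
  simp [Real.sinh_zero, Real.cosh_zero] at this
  linarith

lemma pade (s : ℝ) (hs : 0 ≤ s) : 2 * (Real.exp s - 1) ≤ s * (Real.exp s + 1) := by
  have key := sinh_le_mul_cosh (s / 2) (by linarith)
  rw [Real.sinh_eq, Real.cosh_eq] at key
  have hmul : Real.exp (s / 2) * Real.exp (s / 2) = Real.exp s := by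
    rw [← Real.exp_add]; ring_nf
  have hinv : Real.exp (s / 2) * Real.exp (-(s / 2)) = 1 := by
    rw [← Real.exp_add]; simp
  have hpos : 0 < Real.exp (s / 2) := Real.exp_pos _
  nlinarith [mul_le_mul_of_nonneg_left key (le_of_lt hpos)]

lemma aux (a b : ℝ) (hb : 0 < b) (hab : b ≤ a) :
    2 * (a - b) ≤ (Real.log a - Real.log b) * (a + b) := by
  have ha : 0 < a := lt_of_lt_of_le hb hab
  set s := Real.log a - Real.log b with hsdef
  have hs : 0 ≤ s := by
    have := Real.log_le_log hb hab
    linarith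
  have hes : Real.exp s = a / b := by
    rw [hsdef, ← Real.log_div (ne_of_gt ha) (ne_of_gt hb), Real.exp_log (div_pos ha hb)]
  have := pade s hs
  rw [hes] at this
  have h2 : 2 * (a / b - 1) * b ≤ s * (a / b + 1) * b :=
    mul_le_mul_of_nonneg_right this (le_of_lt hb)
  have e1 : 2 * (a / b - 1) * b = 2 * (a - b) := by field_simp
  have e2 : s * (a / b + 1) * b = s * (a + b) := by field_simp
  rw [e1, e2] at h2
  exact h2

theorem mlsi_dominates_lsi_pointwise (u v : ℝ) (hu : 0 < u) (hv : 0 < v) :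
    (u - v) * (Real.log u - Real.log v) ≥ 4 * (Real.sqrt u - Real.sqrt v) ^ 2 := by
  wlog hvu : v ≤ u with H
  · have := H v u hv hu (le_of_not_ge hvu)
    have heq : (v - u) * (Real.log v - Real.log u) = (u - v) * (Real.log u - Real.log v) := by ring
    have heq2 : (Real.sqrt v - Real.sqrt u) ^ 2 = (Real.sqrt u - Real.sqrt v) ^ 2 := by ring
    rw [heq, heq2] at this
    exact this
  set a := Real.sqrt u with hadef
  set b := Real.sqrt v with hbdef
  have ha : 0 < a := Real.sqrt_pos.mpr hu
  have hb : 0 < b := Real.sqrt_pos.mpr hv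
  have hab : b ≤ a := Real.sqrt_le_sqrt hvu
  have hu2 : u = a ^ 2 := (Real.sq_sqrt (le_of_lt hu)).symm
  have hv2 : v = b ^ 2 := (Real.sq_sqrt (le_of_lt hv)).symm
  have hlogu : Real.log u = 2 * Real.log a := by
    rw [hu2, Real.log_pow]; push_cast; ring
  have hlogv : Real.log v = 2 * Real.log b := by
    rw [hv2, Real.log_pow]; push_cast; ring
  have key := aux a b hb hab
  rw [ge_iff_le, hlogu, hlogv, hu2, hv2]
  nlinarith [mul_le_mul_of_nonneg_left key (sub_nonneg.mpr hab)]
end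

section
/- The function Ψ : ℝ>0 × ℝ>0 → ℝ defined by Ψ(u, v) = (u - v)(log u - log v) is jointly convex on (0, ∞)². -/
/-!
With `φ x = (x - 1) log x` one has `Ψ(u, v) = v φ(u / v)`, so `Ψ` is the perspective of `φ`.
The function `φ = x log x - log x` is convex, and the perspective of a convex function is jointly
convex: `(a x₁ + b x₂) / (a t₁ + b t₂)` is the convex combination of `x₁ / t₁` and `x₂ / t₂` with
weights `a t₁ / (a t₁ + b t₂)` and `b t₂ / (a t₁ + b t₂)`.
-/

open Real Set

section Perspective

variable {E : Type*} [AddCommGroup E] [Module ℝ E]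

lemma inv_smul_add_smul_eq_convex_combo {x₁ x₂ : E} {t₁ t₂ a b : ℝ} (ht₁ : t₁ ≠ 0)
    (ht₂ : t₂ ≠ 0) (ht : a * t₁ + b * t₂ ≠ 0) :
    (a * t₁ + b * t₂)⁻¹ • (a • x₁ + b • x₂) =
      (a * t₁ / (a * t₁ + b * t₂)) • (t₁⁻¹ • x₁) + (b * t₂ / (a * t₁ + b * t₂)) • (t₂⁻¹ • x₂) := by
  simp only [smul_smul, smul_add]
  congr 2 <;> field_simp

theorem ConvexOn.perspective {s : Set E} {f : E → ℝ} (hf : ConvexOn ℝ s f) :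
    ConvexOn ℝ {p : E × ℝ | 0 < p.2 ∧ p.2⁻¹ • p.1 ∈ s} (fun p => p.2 * f (p.2⁻¹ • p.1)) := by
  have key : ∀ ⦃x₁ x₂ : E⦄ ⦃t₁ t₂ a b : ℝ⦄, 0 < t₁ → t₁⁻¹ • x₁ ∈ s → 0 < t₂ → t₂⁻¹ • x₂ ∈ s →
      0 ≤ a → 0 ≤ b → a + b = 1 → 0 < a * t₁ + b * t₂ ∧
        (a * t₁ + b * t₂)⁻¹ • (a • x₁ + b • x₂) ∈ s ∧
        (a * t₁ + b * t₂) * f ((a * t₁ + b * t₂)⁻¹ • (a • x₁ + b • x₂)) ≤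
          a * (t₁ * f (t₁⁻¹ • x₁)) + b * (t₂ * f (t₂⁻¹ • x₂)) := by
    intro x₁ x₂ t₁ t₂ a b ht₁ hx₁ ht₂ hx₂ ha hb hab
    set t := a * t₁ + b * t₂
    have ht : 0 < t := convex_Ioi (0 : ℝ) ht₁ ht₂ ha hb hab
    have hc : 0 ≤ a * t₁ / t := by positivity
    have hd : 0 ≤ b * t₂ / t := by positivity
    have hcd : a * t₁ / t + b * t₂ / t = 1 := by rw [← add_div, div_self ht.ne']
    rw [inv_smul_add_smul_eq_convex_combo ht₁.ne' ht₂.ne' ht.ne']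
    refine ⟨ht, hf.1 hx₁ hx₂ hc hd hcd, ?_⟩
    calc t * f ((a * t₁ / t) • (t₁⁻¹ • x₁) + (b * t₂ / t) • (t₂⁻¹ • x₂))
        ≤ t * ((a * t₁ / t) • f (t₁⁻¹ • x₁) + (b * t₂ / t) • f (t₂⁻¹ • x₂)) :=
          mul_le_mul_of_nonneg_left (hf.2 hx₁ hx₂ hc hd hcd) ht.le
      _ = a * (t₁ * f (t₁⁻¹ • x₁)) + b * (t₂ * f (t₂⁻¹ • x₂)) := by
          simp only [smul_eq_mul]
          field_simp
  constructor
  · rintro ⟨x₁, t₁⟩ ⟨ht₁, hx₁⟩ ⟨x₂, t₂⟩ ⟨ht₂, hx₂⟩ a b ha hb hab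
    obtain ⟨ht, hx, -⟩ := key ht₁ hx₁ ht₂ hx₂ ha hb hab
    exact ⟨ht, hx⟩
  · rintro ⟨x₁, t₁⟩ ⟨ht₁, hx₁⟩ ⟨x₂, t₂⟩ ⟨ht₂, hx₂⟩ a b ha hb hab
    exact (key ht₁ hx₁ ht₂ hx₂ ha hb hab).2.2

end Perspective

lemma convexOn_sub_one_mul_log : ConvexOn ℝ (Ioi 0) (fun x : ℝ => (x - 1) * log x) := by
  have h := (convexOn_mul_log.subset Ioi_subset_Ici_self (convex_Ioi 0)).add
    strictConcaveOn_log_Ioi.concaveOn.neg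
  refine h.congr fun x _ => ?_
  simp only [Pi.add_apply, Pi.neg_apply]
  ring

lemma setOf_pos_inv_smul_mem_Ioi :
    {p : ℝ × ℝ | 0 < p.2 ∧ p.2⁻¹ • p.1 ∈ Ioi 0} = Ioi 0 ×ˢ Ioi 0 := by
  ext ⟨u, v⟩
  simp only [mem_ofPred_eq, mem_Ioi, mem_prod, smul_eq_mul]
  constructor
  · rintro ⟨hv, huv⟩
    exact ⟨pos_of_mul_pos_right huv (inv_pos.2 hv).le, hv⟩
  · rintro ⟨hu, hv⟩
    exact ⟨hv, by positivity⟩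

theorem mlsi_psi_convex :
    ConvexOn ℝ (Set.Ioi (0:ℝ) ×ˢ Set.Ioi (0:ℝ))
      (fun p : ℝ × ℝ => (p.1 - p.2) * (Real.log p.1 - Real.log p.2)) := by
  have h := convexOn_sub_one_mul_log.perspective
  rw [setOf_pos_inv_smul_mem_Ioi] at h
  refine h.congr ?_
  rintro ⟨u, v⟩ ⟨hu, hv⟩
  simp only [mem_Ioi, smul_eq_mul] at hu hv ⊢
  rw [log_mul (inv_pos.2 hv).ne' hu.ne', log_inv]
  field_simp
  ring
end

section
/- Let a, b > 0 and let π be the probability measure on {0,1} with π(0) = b/(a+b), π(1) = a/(a+b). Then for every positive function f : {0,1} → (0,∞), the two-state modified log-Sobolev inequality holds with constant a+b: (ab/(a+b))·(f(0)-f(1))·(log f(0) - log f(1)) ≥ (a+b)·Ent_π(f), where Ent_π(f) = E_π[f log f] - E_π[f]·log E_π[f]. -/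
/-- Two-state modified log-Sobolev inequality with constant `a + b`. -/
theorem two_state_mlsi (a b : ℝ) (ha : 0 < a) (hb : 0 < b)
    (f : Fin 2 → ℝ) (hf : ∀ i, 0 < f i) :
    (a * b / (a + b)) * (f 0 - f 1) * (Real.log (f 0) - Real.log (f 1)) ≥
      (a + b) *
        ((b / (a + b)) * (f 0 * Real.log (f 0)) + (a / (a + b)) * (f 1 * Real.log (f 1))
          - ((b / (a + b)) * f 0 + (a / (a + b)) * f 1) *
              Real.log ((b / (a + b)) * f 0 + (a / (a + b)) * f 1)) := by
  have hx : 0 < f 0 := hf 0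
  have hy : 0 < f 1 := hf 1
  have hab : 0 < a + b := by linarith
  set x := f 0
  set y := f 1
  set p := b / (a + b) with hp
  set q := a / (a + b) with hq
  have hp0 : 0 < p := by positivity
  have hq0 : 0 < q := by positivity
  have hpq : p + q = 1 := by rw [hp, hq]; field_simp; ring
  have hm : 0 < p * x + q * y := by positivity
  have key : p * Real.log x + q * Real.log y ≤ Real.log (p * x + q * y) := by
    have h := strictConcaveOn_log_Ioi.concaveOn.2 (Set.mem_Ioi.2 hx) (Set.mem_Ioi.2 hy)
      hp0.le hq0.le hpq
    simpa [smul_eq_mul] using h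
  have h2 : (p * x + q * y) * (p * Real.log x + q * Real.log y)
      ≤ (p * x + q * y) * Real.log (p * x + q * y) :=
    mul_le_mul_of_nonneg_left key hm.le
  have h3 : (a + b) * (p * (x * Real.log x) + q * (y * Real.log y)
        - (p * x + q * y) * (p * Real.log x + q * Real.log y))
      = (a * b / (a + b)) * (x - y) * (Real.log x - Real.log y) := by
    rw [hp, hq]; field_simp; ring
  nlinarith [mul_le_mul_of_nonneg_left h2 hab.le]
end

section
/- Let a, b > 0 with a ≠ b, and let π be the probability measure on {0,1} with π(0) = b/(a+b), π(1) = a/(a+b). Then for every positive function f : {0,1} → (0,∞), the two-state log-Sobolev inequality (ab/(a+b))·(√f(0) - √f(1))² ≥ ρ·Ent_π(f) holds with ρ = (a-b)/(log a - log b). -/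
open Real Set

/-!
Put `p = b/(a+b)`, `q = a/(a+b)` and `c = ρ/(a+b) = (q - p)/(log q - log p)`, the logarithmic
mean of `p` and `q`; the claim becomes `c · Ent(x, y) ≤ p q (√x - √y)²`. Both sides are
homogeneous of degree one in `(x, y)`, so it suffices to show that the deficit
`D(s) = p q (s - 1)² - c · Ent(s², 1)` is nonnegative for `s > 0`. It vanishes at `s = 1` (constant
functions) and at `s = q/p`, and `D'(s) = 2 p s ψ(s)`, where `ψ` also vanishes at `1` and `q/p` and
`ψ'` has the sign of `p s² - 2 c s + q`. The mean inequalities `√(pq) ≤ c ≤ (p + q)/2` put both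
roots of this quadratic in `[1, q/p]`, so `ψ` increases, decreases, then increases again. Hence
`D` decreases, increases, decreases and increases, and its two local minima are its zeros `1`
and `q/p`.
-/

theorem monotoneOn_of_hasDerivAt_nonneg {f f' : ℝ → ℝ} {D : Set ℝ} (hD : Convex ℝ D)
    (hf : ∀ x ∈ D, HasDerivAt f (f' x) x) (hf' : ∀ x ∈ D, 0 ≤ f' x) : MonotoneOn f D :=
  monotoneOn_of_hasDerivWithinAt_nonneg hD (fun x hx ↦ (hf x hx).continuousAt.continuousWithinAt)
    (fun x hx ↦ (hf x (interior_subset hx)).hasDerivWithinAt) fun x hx ↦ hf' x (interior_subset hx)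

theorem antitoneOn_of_hasDerivAt_nonpos {f f' : ℝ → ℝ} {D : Set ℝ} (hD : Convex ℝ D)
    (hf : ∀ x ∈ D, HasDerivAt f (f' x) x) (hf' : ∀ x ∈ D, f' x ≤ 0) : AntitoneOn f D :=
  antitoneOn_of_hasDerivWithinAt_nonpos hD (fun x hx ↦ (hf x hx).continuousAt.continuousWithinAt)
    (fun x hx ↦ (hf x (interior_subset hx)).hasDerivWithinAt) fun x hx ↦ hf' x (interior_subset hx)

section

variable {p q c x y : ℝ}

theorem sqrt_mul_mul_log_sub_log_le (hp : 0 < p) (hpq : p ≤ q) :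
    √(p * q) * (log q - log p) ≤ q - p := by
  have hq : 0 < q := hp.trans_le hpq
  have hsp : 0 < √p := sqrt_pos.2 hp
  have hsq : 0 < √q := sqrt_pos.2 hq
  have hlog : log q - log p = 2 * log (√q / √p) := by
    rw [log_div hsq.ne' hsp.ne', log_sqrt hq.le, log_sqrt hp.le]; ring
  have hsinh := self_le_sinh_iff.2 (log_nonneg ((one_le_div hsp).2 (sqrt_le_sqrt hpq)))
  rw [sinh_log (div_pos hsq hsp), inv_div] at hsinh
  have key : √(p * q) * (√q / √p - √p / √q) = q - p := by
    rw [sqrt_mul hp.le]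
    field_simp
    rw [sq_sqrt hq.le, sq_sqrt hp.le]
  rw [hlog, ← key]
  have := sqrt_nonneg (p * q)
  nlinarith

theorem two_mul_sub_le_add_mul_log_sub_log (hp : 0 < p) (hpq : p ≤ q) :
    2 * (q - p) ≤ (q + p) * (log q - log p) := by
  have hqp : 0 < q + p := by linarith
  set z := (q - p) / (q + p)
  have hz : 0 ≤ z := div_nonneg (by linarith) hqp.le
  have hz1 : |z| < 1 := by
    rw [abs_of_nonneg hz, div_lt_one hqp]; linarith
  have hlog : log (1 + z) - log (1 - z) = log q - log p := by
    have h1 : 1 + z = 2 / (q + p) * q := by simp only [z]; field_simp; ring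
    have h2 : 1 - z = 2 / (q + p) * p := by simp only [z]; field_simp; ring
    have h2p : 2 / (q + p) ≠ 0 := by positivity
    rw [h1, h2, log_mul h2p (by linarith), log_mul h2p hp.ne']
    ring
  have hsum := hasSum_log_sub_log_of_abs_lt_one hz1
  rw [hlog] at hsum
  have hfirst := le_hasSum hsum 0 fun k _ ↦ by positivity
  norm_num [z, mul_div_assoc', div_le_iff₀ hqp] at hfirst
  linarith

theorem mul_le_sq_of_mul_log_sub_log_eq (hp : 0 < p) (hpq : p < q)
    (hc : c * (log q - log p) = q - p) : p * q ≤ c ^ 2 := by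
  have hL : 0 < log q - log p := sub_pos.2 (log_lt_log hp hpq)
  have hle : √(p * q) ≤ c :=
    le_of_mul_le_mul_right ((sqrt_mul_mul_log_sub_log_le hp hpq.le).trans hc.ge) hL
  simpa [sq_sqrt (mul_pos hp (hp.trans hpq)).le] using pow_le_pow_left₀ (sqrt_nonneg _) hle 2

theorem two_mul_le_add_of_mul_log_sub_log_eq (hp : 0 < p) (hpq : p < q)
    (hc : c * (log q - log p) = q - p) : 2 * c ≤ p + q := by
  have hL : 0 < log q - log p := sub_pos.2 (log_lt_log hp hpq)
  have := two_mul_sub_le_add_mul_log_sub_log hp hpq.le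
  rw [← hc] at this
  nlinarith

theorem exists_roots_mem_Icc (hp : 0 < p) (hpq : p ≤ q) (hc : 0 ≤ c)
    (hgm : p * q ≤ c ^ 2) (ham : 2 * c ≤ p + q) :
    ∃ s₁ s₂, 1 ≤ s₁ ∧ s₁ ≤ s₂ ∧ s₂ ≤ q / p ∧
      ∀ s, p * s ^ 2 - 2 * c * s + q = p * (s - s₁) * (s - s₂) := by
  set σ := √(c ^ 2 - p * q)
  have hσ : σ ^ 2 = c ^ 2 - p * q := sq_sqrt (by linarith)
  have hσ₀ : 0 ≤ σ := sqrt_nonneg _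
  have hpc : p ≤ c := by nlinarith
  refine ⟨(c - σ) / p, (c + σ) / p, ?_, by gcongr; linarith, ?_, fun s ↦ ?_⟩
  · rw [le_div_iff₀ hp, one_mul, ← sub_nonneg]
    nlinarith
  · gcongr
    nlinarith
  · field_simp
    linear_combination hσ

theorem forall_nonneg_Icc_or_forall_nonpos_Icc {φ : ℝ → ℝ} {l s₁ s₂ r s : ℝ} (h₁ : l ≤ s₁)
    (h₂ : s₂ ≤ r) (hmono₁ : MonotoneOn φ (Icc l s₁)) (hanti : AntitoneOn φ (Icc s₁ s₂))
    (hmono₂ : MonotoneOn φ (Icc s₂ r)) (hl : 0 ≤ φ l) (hr : φ r ≤ 0) :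
    (∀ x ∈ Icc l s, 0 ≤ φ x) ∨ ∀ x ∈ Icc s r, φ x ≤ 0 := by
  rcases le_total s s₁ with hs₁ | hs₁
  · exact .inl fun x hx ↦ hl.trans (hmono₁ ⟨le_rfl, h₁⟩ ⟨hx.1, hx.2.trans hs₁⟩ hx.1)
  rcases le_total s₂ s with hs₂ | hs₂
  · exact .inr fun x hx ↦ (hmono₂ ⟨hs₂.trans hx.1, hx.2⟩ ⟨h₂, le_rfl⟩ hx.2).trans hr
  rcases le_total 0 (φ s) with hφ | hφ
  · refine .inl fun x hx ↦ ?_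
    rcases le_total x s₁ with hx₁ | hx₁
    · exact hl.trans (hmono₁ ⟨le_rfl, h₁⟩ ⟨hx.1, hx₁⟩ hx.1)
    · exact hφ.trans (hanti ⟨hx₁, hx.2.trans hs₂⟩ ⟨hs₁, hs₂⟩ hx.2)
  · refine .inr fun x hx ↦ ?_
    rcases le_total x s₂ with hx₂ | hx₂
    · exact (hanti ⟨hs₁, hs₂⟩ ⟨hs₁.trans hx.1, hx₂⟩ hx.1).trans hφ
    · exact (hmono₂ ⟨hx₂, hx.2⟩ ⟨h₂, le_rfl⟩ hx.2).trans hr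

/-- `Ent_π f` for `π = (p, q)` and `f = (x, y)`. -/
noncomputable def twoPointEnt (p q x y : ℝ) : ℝ :=
  p * (x * log x) + q * (y * log y) - (p * x + q * y) * log (p * x + q * y)

theorem twoPointEnt_comm : twoPointEnt q p y x = twoPointEnt p q x y := by
  simp only [twoPointEnt, add_comm]

theorem twoPointEnt_const_mul {t : ℝ} (ht : t ≠ 0) (hx : x ≠ 0) (hy : y ≠ 0)
    (hm : p * x + q * y ≠ 0) : twoPointEnt p q (t * x) (t * y) = t * twoPointEnt p q x y := by
  have hmt : p * (t * x) + q * (t * y) = t * (p * x + q * y) := by ring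
  simp only [twoPointEnt, hmt, log_mul ht hx, log_mul ht hy, log_mul ht hm]
  ring

noncomputable def lsiDeficit (p q c s : ℝ) : ℝ :=
  p * q * (s - 1) ^ 2 - c * twoPointEnt p q (s ^ 2) 1

noncomputable def deficitSlope (p q c s : ℝ) : ℝ :=
  q * (1 - s⁻¹) - c * (log (s ^ 2) - log (p * s ^ 2 + q))

theorem hasDerivAt_lsiDeficit (hp : 0 < p) (hq : 0 < q) {s : ℝ} (hs : 0 < s) :
    HasDerivAt (lsiDeficit p q c) (2 * p * s * deficitSlope p q c s) s := by
  have hm : p * s ^ 2 + q * 1 ≠ 0 := by positivity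
  have hsq : HasDerivAt (fun s : ℝ ↦ s ^ 2) (2 * s) s := by simpa using hasDerivAt_pow 2 s
  have hmean : HasDerivAt (fun s : ℝ ↦ p * s ^ 2 + q * 1) (p * (2 * s)) s :=
    (hsq.const_mul p).add_const _
  have hent := (((hsq.mul (hsq.log (by positivity))).const_mul p).add_const
    (q * (1 * log 1))).sub (hmean.mul (hmean.log hm))
  refine ((((hasDerivAt_id s).sub_const 1).pow 2).const_mul (p * q) |>.sub
    (hent.const_mul c)).congr_deriv ?_
  simp only [deficitSlope, id, mul_one]
  field_simp
  ring

theorem hasDerivAt_deficitSlope (hp : 0 < p) (hq : 0 < q) {s : ℝ} (hs : 0 < s) :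
    HasDerivAt (deficitSlope p q c)
      (q * (p * s ^ 2 - 2 * c * s + q) / (s ^ 2 * (p * s ^ 2 + q))) s := by
  have hsq : HasDerivAt (fun s : ℝ ↦ s ^ 2) (2 * s) s := by simpa using hasDerivAt_pow 2 s
  have hmean : HasDerivAt (fun s : ℝ ↦ p * s ^ 2 + q) (p * (2 * s)) s :=
    (hsq.const_mul p).add_const _
  refine ((((hasDerivAt_inv hs.ne').const_sub 1).const_mul q).sub
    (((hsq.log (by positivity)).sub (hmean.log (by positivity))).const_mul c)).congr_deriv ?_
  field_simp
  ring

theorem deficitSlope_monotoneOn (hp : 0 < p) (hq : 0 < q) {D : Set ℝ} (hD : Convex ℝ D)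
    (hD₀ : D ⊆ Ioi 0) (hQ : ∀ s ∈ D, 0 ≤ p * s ^ 2 - 2 * c * s + q) :
    MonotoneOn (deficitSlope p q c) D :=
  monotoneOn_of_hasDerivAt_nonneg hD (fun _ hs ↦ hasDerivAt_deficitSlope hp hq (hD₀ hs))
    fun s hs ↦ div_nonneg (mul_nonneg hq.le (hQ s hs)) (by have : 0 < s := hD₀ hs; positivity)

theorem deficitSlope_antitoneOn (hp : 0 < p) (hq : 0 < q) {D : Set ℝ} (hD : Convex ℝ D)
    (hD₀ : D ⊆ Ioi 0) (hQ : ∀ s ∈ D, p * s ^ 2 - 2 * c * s + q ≤ 0) :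
    AntitoneOn (deficitSlope p q c) D :=
  antitoneOn_of_hasDerivAt_nonpos hD (fun _ hs ↦ hasDerivAt_deficitSlope hp hq (hD₀ hs))
    fun s hs ↦ div_nonpos_of_nonpos_of_nonneg
      (mul_nonpos_of_nonneg_of_nonpos hq.le (hQ s hs)) (by positivity)

theorem lsiDeficit_monotoneOn (hp : 0 < p) (hq : 0 < q) {D : Set ℝ} (hD : Convex ℝ D)
    (hD₀ : D ⊆ Ioi 0) (hψ : ∀ s ∈ D, 0 ≤ deficitSlope p q c s) :
    MonotoneOn (lsiDeficit p q c) D :=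
  monotoneOn_of_hasDerivAt_nonneg hD (fun _ hs ↦ hasDerivAt_lsiDeficit hp hq (hD₀ hs))
    fun s hs ↦ mul_nonneg (by have : 0 < s := hD₀ hs; positivity) (hψ s hs)

theorem lsiDeficit_antitoneOn (hp : 0 < p) (hq : 0 < q) {D : Set ℝ} (hD : Convex ℝ D)
    (hD₀ : D ⊆ Ioi 0) (hψ : ∀ s ∈ D, deficitSlope p q c s ≤ 0) :
    AntitoneOn (lsiDeficit p q c) D :=
  antitoneOn_of_hasDerivAt_nonpos hD (fun _ hs ↦ hasDerivAt_lsiDeficit hp hq (hD₀ hs))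
    fun s hs ↦ mul_nonpos_of_nonneg_of_nonpos (by have : 0 < s := hD₀ hs; positivity) (hψ s hs)

theorem deficitSlope_one (hpq : p + q = 1) : deficitSlope p q c 1 = 0 := by
  simp [deficitSlope, hpq]

theorem lsiDeficit_one (hpq : p + q = 1) : lsiDeficit p q c 1 = 0 := by
  simp [lsiDeficit, twoPointEnt, hpq]

theorem deficitSlope_div (hp : 0 < p) (hq : 0 < q) (hpq : p + q = 1)
    (hc : c * (log q - log p) = q - p) : deficitSlope p q c (q / p) = 0 := by
  have hmean : p * (q / p) ^ 2 + q = q / p := by field_simp; linarith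
  rw [deficitSlope, hmean, log_pow, log_div hq.ne' hp.ne']
  field_simp
  linear_combination -hc

theorem lsiDeficit_div (hp : 0 < p) (hq : 0 < q) (hpq : p + q = 1)
    (hc : c * (log q - log p) = q - p) : lsiDeficit p q c (q / p) = 0 := by
  have hmean : p * (q / p) ^ 2 + q * 1 = q / p := by field_simp; linarith
  rw [lsiDeficit, twoPointEnt, hmean, log_pow, log_div hq.ne' hp.ne', log_one]
  field_simp
  linear_combination (-q * (2 * q - 1)) * hc - q * (q - p) * hpq

theorem exists_deficitSlope_monotoneOn_antitoneOn_monotoneOn (hp : 0 < p) (hlt : p < q)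
    (hc : c * (log q - log p) = q - p) :
    ∃ s₁ s₂, 1 ≤ s₁ ∧ s₁ ≤ s₂ ∧ s₂ ≤ q / p ∧ MonotoneOn (deficitSlope p q c) (Ioc 0 s₁) ∧
      AntitoneOn (deficitSlope p q c) (Icc s₁ s₂) ∧ MonotoneOn (deficitSlope p q c) (Ici s₂) := by
  have hq : 0 < q := hp.trans hlt
  have hc₀ : 0 ≤ c := by
    have : 0 < c * (log q - log p) := by rw [hc]; linarith
    exact (pos_of_mul_pos_left this (sub_pos.2 (log_lt_log hp hlt)).le).le
  obtain ⟨s₁, s₂, h₁, h₁₂, h₂, hQ⟩ := exists_roots_mem_Icc hp hlt.le hc₀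
    (mul_le_sq_of_mul_log_sub_log_eq hp hlt hc) (two_mul_le_add_of_mul_log_sub_log_eq hp hlt hc)
  refine ⟨s₁, s₂, h₁, h₁₂, h₂, ?_, ?_, ?_⟩
  · refine deficitSlope_monotoneOn hp hq (convex_Ioc 0 s₁) (fun x hx ↦ hx.1) fun x hx ↦ ?_
    rw [hQ]
    nlinarith [mul_nonneg (sub_nonneg.2 hx.2) (sub_nonneg.2 (hx.2.trans h₁₂))]
  · refine deficitSlope_antitoneOn hp hq (convex_Icc s₁ s₂)
      (fun x hx ↦ zero_lt_one.trans_le (h₁.trans hx.1)) fun x hx ↦ ?_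
    rw [hQ]
    nlinarith [mul_nonneg (sub_nonneg.2 hx.1) (sub_nonneg.2 hx.2)]
  · refine deficitSlope_monotoneOn hp hq (convex_Ici s₂)
      (fun x hx ↦ zero_lt_one.trans_le (h₁.trans (h₁₂.trans hx))) fun x hx ↦ ?_
    rw [hQ]
    nlinarith [mul_nonneg (sub_nonneg.2 (h₁₂.trans hx)) (sub_nonneg.2 (mem_Ici.1 hx))]

theorem lsiDeficit_nonneg (hp : 0 < p) (hpq : p + q = 1) (hlt : p < q)
    (hc : c * (log q - log p) = q - p) {s : ℝ} (hs : 0 < s) : 0 ≤ lsiDeficit p q c s := by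
  have hq : 0 < q := hp.trans hlt
  obtain ⟨s₁, s₂, h₁, -, h₂, hmono₁, hanti, hmono₂⟩ :=
    exists_deficitSlope_monotoneOn_antitoneOn_monotoneOn hp hlt hc
  have hψ₁ : deficitSlope p q c 1 = 0 := deficitSlope_one hpq
  have hψ₂ := deficitSlope_div hp hq hpq hc
  rcases le_total s 1 with hs₁ | hs₁
  · rw [← lsiDeficit_one (c := c) hpq]
    exact lsiDeficit_antitoneOn hp hq (convex_Ioc 0 1) (fun x hx ↦ hx.1)
      (fun x hx ↦ hψ₁ ▸ hmono₁ ⟨hx.1, hx.2.trans h₁⟩ ⟨one_pos, h₁⟩ hx.2) ⟨hs, hs₁⟩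
      ⟨one_pos, le_rfl⟩ hs₁
  rcases le_total (q / p) s with hs₂ | hs₂
  · rw [← lsiDeficit_div hp hq hpq hc]
    exact lsiDeficit_monotoneOn hp hq (convex_Ici _) (fun x hx ↦ (div_pos hq hp).trans_le hx)
      (fun x hx ↦ hψ₂ ▸ hmono₂ h₂ (h₂.trans hx) hx) self_mem_Ici hs₂ hs₂
  rcases forall_nonneg_Icc_or_forall_nonpos_Icc h₁ h₂
    (hmono₁.mono (Icc_subset_Ioc one_pos le_rfl)) hanti (hmono₂.mono Icc_subset_Ici_self)
    hψ₁.ge hψ₂.le with h | h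
  · rw [← lsiDeficit_one (c := c) hpq]
    exact lsiDeficit_monotoneOn hp hq (convex_Icc 1 s) (fun x hx ↦ one_pos.trans_le hx.1) h
      ⟨le_rfl, hs₁⟩ ⟨hs₁, le_rfl⟩ hs₁
  · rw [← lsiDeficit_div hp hq hpq hc]
    exact lsiDeficit_antitoneOn hp hq (convex_Icc s (q / p)) (fun x hx ↦ hs.trans_le hx.1) h
      ⟨le_rfl, hs₂⟩ ⟨hs₂, le_rfl⟩ hs₂

theorem twoPointEnt_le_of_lt (hp : 0 < p) (hpq : p + q = 1) (hlt : p < q)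
    (hc : c * (log q - log p) = q - p) (hx : 0 < x) (hy : 0 < y) :
    c * twoPointEnt p q x y ≤ p * q * (√x - √y) ^ 2 := by
  set s := √x / √y
  have hsy : √x = s * √y := (div_mul_cancel₀ _ (sqrt_pos.2 hy).ne').symm
  have hx' : x = y * s ^ 2 := by rw [← sq_sqrt hx.le, ← sq_sqrt hy.le, hsy]; ring
  have hs : 0 < s := by positivity
  have hent : twoPointEnt p q x y = y * twoPointEnt p q (s ^ 2) 1 := by
    have hq : 0 < q := hp.trans hlt
    rw [hx', ← twoPointEnt_const_mul hy.ne' (by positivity) one_ne_zero (by positivity), mul_one]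
  have hdef := lsiDeficit_nonneg hp hpq hlt hc hs
  rw [lsiDeficit, sub_nonneg] at hdef
  calc c * twoPointEnt p q x y = y * (c * twoPointEnt p q (s ^ 2) 1) := by rw [hent]; ring
    _ ≤ y * (p * q * (s - 1) ^ 2) := by gcongr
    _ = p * q * ((s - 1) ^ 2 * √y ^ 2) := by rw [sq_sqrt hy.le]; ring
    _ = p * q * (√x - √y) ^ 2 := by rw [hsy]; ring

theorem twoPointEnt_le_of_ne (hp : 0 < p) (hq : 0 < q) (hpq : p + q = 1)
    (hne : p ≠ q) (hc : c * (log q - log p) = q - p) (hx : 0 < x) (hy : 0 < y) :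
    c * twoPointEnt p q x y ≤ p * q * (√x - √y) ^ 2 := by
  rcases hne.lt_or_gt with hlt | hlt
  · exact twoPointEnt_le_of_lt hp hpq hlt hc hx hy
  · have := twoPointEnt_le_of_lt (c := c) hq (by linarith) hlt (by linarith) hy hx
    rwa [twoPointEnt_comm, mul_comm q, ← neg_sub, neg_sq] at this

end

/-- Two-state log-Sobolev inequality with constant `ρ = (a-b)/(log a - log b)`. -/
theorem two_state_lsi (a b : ℝ) (ha : 0 < a) (hb : 0 < b) (hab : a ≠ b)
    (f : Fin 2 → ℝ) (hf : ∀ i, 0 < f i) :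
    (a * b / (a + b)) * (Real.sqrt (f 0) - Real.sqrt (f 1)) ^ 2 ≥
      ((a - b) / (Real.log a - Real.log b)) *
        ((b / (a + b)) * (f 0 * Real.log (f 0)) + (a / (a + b)) * (f 1 * Real.log (f 1))
          - ((b / (a + b)) * f 0 + (a / (a + b)) * f 1) *
              Real.log ((b / (a + b)) * f 0 + (a / (a + b)) * f 1)) := by
  have hsum : 0 < a + b := by positivity
  have hL : log a - log b ≠ 0 := sub_ne_zero.2 fun h ↦ hab (log_injOn_pos ha hb h)
  set ρ := (a - b) / (log a - log b)
  set p := b / (a + b)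
  set q := a / (a + b)
  have hc : ρ / (a + b) * (log q - log p) = q - p := by
    rw [log_div ha.ne' hsum.ne', log_div hb.ne' hsum.ne', sub_sub_sub_cancel_right]
    simp only [ρ, p, q]
    field_simp
  have key := twoPointEnt_le_of_ne (div_pos hb hsum) (div_pos ha hsum) (by field_simp; ring)
    (fun h ↦ hab (by field_simp at h; linarith)) hc (hf 0) (hf 1)
  calc ρ * twoPointEnt p q (f 0) (f 1)
      = (a + b) * (ρ / (a + b) * twoPointEnt p q (f 0) (f 1)) := by field_simp
    _ ≤ (a + b) * (p * q * (√(f 0) - √(f 1)) ^ 2) := by gcongr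
    _ = a * b / (a + b) * (√(f 0) - √(f 1)) ^ 2 := by
      simp only [p, q]; field_simp
end

section
/- Let π be a probability measure on {0,1}ⁿ with the stochastic covering property (SCP), and let Ω_0 = {x in the support : x_n = 0} and Ω_1 = {x in the support : x_n = 1}, both assumed nonempty, with conditional measures π_0 and π_1. Then there exists a coupling κ of π_0 and π_1 supported on pairs (x,y) with x ∈ Ω_0, y ∈ Ω_1 and x ∼ y, where x ∼ y means x and y differ by a single flip (y = x + e_j) or a single swap (y = x + e_j - e_k, j ≠ k). -/
open Finset

/-- `u ▷ v` : `u` is obtained from `v` by raising at most one coordinate. -/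
def coversConf {α : Type*} [DecidableEq α] (u v : α → Bool) : Prop :=
  u = v ∨ ∃ i, v i = false ∧ u = Function.update v i true

/-- Lift of `▷` to (finitely supported) measures: there is a coupling supported on
`{(u, v) : u ▷ v}`. -/
def measCovers {α : Type*} [Fintype α] [DecidableEq α]
    (μ ν : (α → Bool) → ℝ) : Prop :=
  ∃ κ : (α → Bool) × (α → Bool) → ℝ,
    (∀ p, 0 ≤ κ p) ∧ (∀ u, ∑ v, κ (u, v) = μ u) ∧ (∀ v, ∑ u, κ (u, v) = ν v) ∧
    ∀ p, κ p ≠ 0 → coversConf p.1 p.2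

/-- Mass of the conditioning event `X_S = x`. -/
def condWeight {n : ℕ} (π : (Fin n → Bool) → ℝ) (S : Finset (Fin n))
    (x : {i // i ∈ S} → Bool) : ℝ :=
  ∑ z ∈ univ.filter (fun z : Fin n → Bool => ∀ i : {i // i ∈ S}, z i.1 = x i), π z

/-- Conditional law of the coordinates outside `S` given `X_S = x`. -/
noncomputable def condLaw {n : ℕ} (π : (Fin n → Bool) → ℝ) (S : Finset (Fin n))
    (x : {i // i ∈ S} → Bool) : ({i // i ∉ S} → Bool) → ℝ :=
  fun w =>
    (∑ z ∈ univ.filter (fun z : Fin n → Bool =>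
        (∀ i : {i // i ∈ S}, z i.1 = x i) ∧ ∀ j : {i // i ∉ S}, z j.1 = w j), π z) /
      condWeight π S x

/-- The stochastic covering property. -/
def SCP {n : ℕ} (π : (Fin n → Bool) → ℝ) : Prop :=
  ∀ S : Finset (Fin n), ∀ x y : {i // i ∈ S} → Bool,
    0 < condWeight π S x → 0 < condWeight π S y → coversConf x y →
      measCovers (condLaw π S y) (condLaw π S x)

/-- `x ∼ y` : `y` is obtained from `x` by a single flip up or a single swap. -/
def flipSwap {n : ℕ} (x y : Fin n → Bool) : Prop :=
  (∃ j, x j = false ∧ y = Function.update x j true) ∨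
  (∃ j k, j ≠ k ∧ x j = false ∧ x k = true ∧
      y = Function.update (Function.update x j true) k false)

/-! Condition on the coordinate `ℓ`: the SCP for `S = {ℓ}` couples the law of the other
coordinates given `x_ℓ = 0` with their law given `x_ℓ = 1` so that the former equals the
latter, or the latter with one coordinate `k` raised. Putting back `x_ℓ = 0` and `x_ℓ = 1`,
the first case is a flip at `ℓ` and the second a swap of `ℓ` and `k`. -/

section Split

variable {α : Type*} [DecidableEq α]

def restrictAway (ℓ : α) (z : α → Bool) : {i // i ∉ ({ℓ} : Finset α)} → Bool :=
  fun j => z j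

def splitAt (ℓ : α) : (α → Bool) ≃ Bool × ({i // i ∉ ({ℓ} : Finset α)} → Bool) where
  toFun z := (z ℓ, restrictAway ℓ z)
  invFun p i := if h : i ∈ ({ℓ} : Finset α) then p.1 else p.2 ⟨i, h⟩
  left_inv z := by
    funext i
    by_cases h : i = ℓ
    · subst h; simp
    · simp [h, restrictAway]
  right_inv p := by
    ext j
    · simp
    · simp [restrictAway, j.2]

lemma sum_ite_apply_eq_restrictAway [Fintype α] {M : Type*} [AddCommMonoid M] (ℓ : α) (b : Bool)
    (f : ({i // i ∉ ({ℓ} : Finset α)} → Bool) → M) :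
    ∑ z, (if z ℓ = b then f (restrictAway ℓ z) else 0) = ∑ w, f w := by
  refine ((splitAt ℓ).sum_comp (fun p => if p.1 = b then f p.2 else 0)).trans ?_
  simp [Fintype.sum_prod_type]

lemma eq_of_restrictAway_eq {ℓ : α} {x y : α → Bool} (hℓ : x ℓ = y ℓ)
    (h : restrictAway ℓ x = restrictAway ℓ y) : x = y :=
  (splitAt ℓ).injective (Prod.ext hℓ h)

lemma coversConf_const_true_false {ι : Type*} [DecidableEq ι] [Subsingleton ι] (i : ι) :
    coversConf (fun _ : ι => true) (fun _ => false) :=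
  Or.inr ⟨i, rfl, funext fun j => by rw [Subsingleton.elim j i, Function.update_self]⟩

end Split

section Singleton

variable {n : ℕ} (π : (Fin n → Bool) → ℝ) (ℓ : Fin n)

lemma condWeight_singleton (b : Bool) :
    condWeight π {ℓ} (fun _ => b) = ∑ z ∈ univ.filter (fun z : Fin n → Bool => z ℓ = b), π z := by
  unfold condWeight
  congr 1
  ext z
  simp

lemma condLaw_singleton_restrictAway {b : Bool} {z : Fin n → Bool} (hz : z ℓ = b) :
    condLaw π {ℓ} (fun _ => b) (restrictAway ℓ z) = π z / condWeight π {ℓ} (fun _ => b) := by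
  unfold condLaw
  congr 1
  convert Finset.sum_singleton π z
  ext y
  simp only [mem_filter, mem_univ, true_and, mem_singleton]
  constructor
  · rintro ⟨hℓ, hrest⟩
    exact eq_of_restrictAway_eq ((hℓ ⟨ℓ, mem_singleton_self ℓ⟩).trans hz.symm) (funext hrest)
  · rintro rfl
    exact ⟨fun i => by rw [mem_singleton.mp i.2, hz], fun _ => rfl⟩

lemma flipSwap_of_coversConf_restrictAway {x y : Fin n → Bool} (hx : x ℓ = false)
    (hy : y ℓ = true) (h : coversConf (restrictAway ℓ x) (restrictAway ℓ y)) : flipSwap x y := by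
  rcases h with heq | ⟨i, hi, hupd⟩
  · refine Or.inl ⟨ℓ, hx, (Function.update_eq_iff.mpr ⟨hy.symm, fun m hm => ?_⟩).symm⟩
    exact congrFun heq ⟨m, by simpa using hm⟩
  · have hiℓ : i.1 ≠ ℓ := fun h => i.2 (by simp [h])
    refine Or.inr ⟨ℓ, i, hiℓ.symm, hx, by simpa [restrictAway] using congrFun hupd i, ?_⟩
    refine (Function.update_eq_iff.mpr ⟨hi.symm, fun m hmi => ?_⟩).symm
    by_cases hmℓ : m = ℓ
    · rw [hmℓ, Function.update_self, hy]
    · have hm : m ∉ ({ℓ} : Finset (Fin n)) := by simpa using hmℓ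
      have hxm := congrFun hupd ⟨m, hm⟩
      rw [Function.update_of_ne (fun h => hmi (congrArg Subtype.val h))] at hxm
      rwa [Function.update_of_ne hmℓ]

end Singleton

theorem scp_coupling_general {n : ℕ} (π : (Fin n → Bool) → ℝ)
    (hSCP : SCP π)
    (ℓ : Fin n) (Z0 Z1 : ℝ)
    (hZ0 : Z0 = ∑ x ∈ univ.filter (fun x : Fin n → Bool => x ℓ = false), π x)
    (hZ1 : Z1 = ∑ x ∈ univ.filter (fun x : Fin n → Bool => x ℓ = true), π x)
    (hZ0pos : 0 < Z0) (hZ1pos : 0 < Z1) :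
    ∃ κ : (Fin n → Bool) × (Fin n → Bool) → ℝ,
      (∀ p, 0 ≤ κ p) ∧
      (∀ x, ∑ y, κ (x, y) = (if x ℓ = false then π x else 0) / Z0) ∧
      (∀ y, ∑ x, κ (x, y) = (if y ℓ = true then π y else 0) / Z1) ∧
      ∀ x y, κ (x, y) ≠ 0 → x ℓ = false ∧ y ℓ = true ∧ flipSwap x y := by
  have hW0 : condWeight π {ℓ} (fun _ => false) = Z0 := hZ0 ▸ condWeight_singleton π ℓ false
  have hW1 : condWeight π {ℓ} (fun _ => true) = Z1 := hZ1 ▸ condWeight_singleton π ℓ true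
  obtain ⟨κ, hκ_nonneg, hκ_left, hκ_right, hκ_supp⟩ :=
    hSCP {ℓ} (fun _ => true) (fun _ => false) (hW1 ▸ hZ1pos) (hW0 ▸ hZ0pos)
      (coversConf_const_true_false ⟨ℓ, mem_singleton_self ℓ⟩)
  refine ⟨fun p => if p.1 ℓ = false ∧ p.2 ℓ = true then
    κ (restrictAway ℓ p.1, restrictAway ℓ p.2) else 0, ?_, fun x => ?_, fun y => ?_, ?_⟩
  · intro p
    dsimp only
    split_ifs
    exacts [hκ_nonneg _, le_rfl]
  · by_cases hx : x ℓ = false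
    · simp only [hx, true_and, if_true, sum_ite_apply_eq_restrictAway ℓ true
        (fun w => κ (restrictAway ℓ x, w)), hκ_left, condLaw_singleton_restrictAway π ℓ hx, hW0]
    · simp [hx]
  · by_cases hy : y ℓ = true
    · simp only [hy, and_true, if_true, sum_ite_apply_eq_restrictAway ℓ false
        (fun w => κ (w, restrictAway ℓ y)), hκ_right, condLaw_singleton_restrictAway π ℓ hy, hW1]
    · simp [hy]
  · intro x y h
    have hxy : x ℓ = false ∧ y ℓ = true := by
      by_contra hxy
      exact h (if_neg hxy)
    refine ⟨hxy.1, hxy.2, flipSwap_of_coversConf_restrictAway ℓ hxy.1 hxy.2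
      (hκ_supp (restrictAway ℓ x, restrictAway ℓ y) ?_)⟩
    simpa only [if_pos hxy] using h

/-- Lemma 2.4: for an SCP measure, the conditionals `π_0, π_1` on `{x_ℓ = 0}` and
`{x_ℓ = 1}` can be coupled along flips and swaps. -/
theorem scp_coupling {n : ℕ} (π : (Fin n → Bool) → ℝ)
    (hπ : ∀ x, 0 ≤ π x) (hπ1 : ∑ x, π x = 1) (hSCP : SCP π)
    (ℓ : Fin n) (Z0 Z1 : ℝ)
    (hZ0 : Z0 = ∑ x ∈ univ.filter (fun x : Fin n → Bool => x ℓ = false), π x)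
    (hZ1 : Z1 = ∑ x ∈ univ.filter (fun x : Fin n → Bool => x ℓ = true), π x)
    (hZ0pos : 0 < Z0) (hZ1pos : 0 < Z1) :
    ∃ κ : (Fin n → Bool) × (Fin n → Bool) → ℝ,
      (∀ p, 0 ≤ κ p) ∧
      (∀ x, ∑ y, κ (x, y) = (if x ℓ = false then π x else 0) / Z0) ∧
      (∀ y, ∑ x, κ (x, y) = (if y ℓ = true then π y else 0) / Z1) ∧
      ∀ x y, κ (x, y) ≠ 0 → x ℓ = false ∧ y ℓ = true ∧ flipSwap x y :=
  scp_coupling_general π hSCP ℓ Z0 Z1 hZ0 hZ1 hZ0pos hZ1pos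
end

section
/- Let Q be a Markov generator on a finite set Ω reversible with respect to π, and let {Ω_i}_{i∈I} be a partition with projection chain (Q̄, π̄) and restriction chains (Q_i, π_i) as usual. Suppose couplings κ_{ij} of π_i, π_j are given for all pairs with Q̄(i,j) > 0, and let χ := min over all (x,y,i,j) with positive denominator of π(x)Q(x,y)/(π̄(i)Q̄(i,j)κ_{ij}(x,y)). Then the Poincaré constant satisfies λ(Q) ≥ min{ χ·λ(Q̄), min_i λ(Q_i) }. -/
/-!
By reversibility the Dirichlet form of `Q` is `½ ∑ π(x) Q(x,y) (f x - f y)²`; split this sum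
into blocks `Ω_i × Ω_j`. A diagonal block is `2 π̄(i)` times the Dirichlet form of the
restriction chain `Q_i`, hence at least `2 π̄(i) λ(Q_i) Var_{π_i} f`. For `i ≠ j`, Jensen's
inequality under the coupling `κ_ij` bounds `(g i - g j)²`, where `g i = E_{π_i} f`, by the
`κ_ij`-average of `(f x - f y)²`, and the definition of `χ` gives `χ π̄(i) Q̄(i,j) κ_ij ≤ π Q`;
so the off-diagonal blocks carry at least `χ` times the Dirichlet form of `Q̄` at `g`,
which is at least `χ λ(Q̄) Var_π̄ g`. The law of total variance
`Var_π f = ∑ π̄(i) Var_{π_i} f + Var_π̄ g` combines the two bounds.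
-/

open Finset

/-- Expectation of `f` under `π`. -/
def expec {Ω : Type*} [Fintype Ω] (π f : Ω → ℝ) : ℝ := ∑ x, π x * f x

/-- Variance of `f` under `π`. -/
def varOf {Ω : Type*} [Fintype Ω] (π f : Ω → ℝ) : ℝ :=
  expec π (fun x => f x ^ 2) - (expec π f) ^ 2

section Dirichlet

variable {α : Type*}

theorem sum_sum_mul_mul_sub_eq_half_sum_sq (s : Finset α) (w : α → α → ℝ)
    (hw : ∀ x ∈ s, ∀ y ∈ s, w x y = w y x) (f : α → ℝ) :
    ∑ x ∈ s, ∑ y ∈ s, w x y * (f x * (f x - f y)) =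
      1 / 2 * ∑ x ∈ s, ∑ y ∈ s, w x y * (f x - f y) ^ 2 := by
  have hswap : ∑ x ∈ s, ∑ y ∈ s, w x y * (f x * (f x - f y)) =
      ∑ x ∈ s, ∑ y ∈ s, w x y * (f y * (f y - f x)) := by
    rw [sum_comm]
    exact sum_congr rfl fun y hy => sum_congr rfl fun x hx => by rw [hw y hy x hx]
  have hsplit : ∑ x ∈ s, ∑ y ∈ s, w x y * (f x - f y) ^ 2 =
      ∑ x ∈ s, ∑ y ∈ s, w x y * (f x * (f x - f y)) +
        ∑ x ∈ s, ∑ y ∈ s, w x y * (f y * (f y - f x)) := by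
    simp only [← sum_add_distrib]
    exact sum_congr rfl fun x _ => sum_congr rfl fun y _ => by ring
  rw [hsplit, ← hswap]
  ring

theorem neg_sum_mul_sum_eq_half_sum_sq [Fintype α] (μ : α → ℝ) (K : α → α → ℝ)
    (hrow : ∀ x, ∑ y, K x y = 0) (hrev : ∀ x y, μ x * K x y = μ y * K y x) (f : α → ℝ) :
    -(∑ x, μ x * f x * ∑ y, K x y * f y) =
      1 / 2 * ∑ x, ∑ y, μ x * K x y * (f x - f y) ^ 2 := by
  rw [← sum_sum_mul_mul_sub_eq_half_sum_sq univ (fun x y => μ x * K x y)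
    (fun x _ y _ => hrev x y), ← sum_neg_distrib]
  refine sum_congr rfl fun x _ => ?_
  have hrow_x : ∑ y, μ x * K x y * (f x * (f x - f y)) =
      μ x * f x ^ 2 * ∑ y, K x y - μ x * f x * ∑ y, K x y * f y := by
    simp only [mul_sum, ← sum_sub_distrib]
    exact sum_congr rfl fun y _ => by ring
  rw [hrow_x, hrow x]
  ring

theorem sq_sub_le_sum_of_coupling (s t : Finset α) (μ ν : α → ℝ) (κ : α → α → ℝ)
    (hκ : ∀ x ∈ s, ∀ y ∈ t, 0 ≤ κ x y) (hμ : ∀ x ∈ s, ∑ y ∈ t, κ x y = μ x)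
    (hν : ∀ y ∈ t, ∑ x ∈ s, κ x y = ν y) (hμ1 : ∑ x ∈ s, μ x = 1) (f : α → ℝ) :
    (∑ x ∈ s, μ x * f x - ∑ y ∈ t, ν y * f y) ^ 2 ≤
      ∑ x ∈ s, ∑ y ∈ t, κ x y * (f x - f y) ^ 2 := by
  have hmean : ∑ x ∈ s, μ x * f x - ∑ y ∈ t, ν y * f y =
      ∑ q ∈ s ×ˢ t, κ q.1 q.2 * (f q.1 - f q.2) := by
    have hleft : ∑ x ∈ s, μ x * f x = ∑ x ∈ s, ∑ y ∈ t, κ x y * f x :=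
      sum_congr rfl fun x hx => by rw [← hμ x hx, sum_mul]
    have hright : ∑ y ∈ t, ν y * f y = ∑ x ∈ s, ∑ y ∈ t, κ x y * f y := by
      rw [sum_comm]
      exact sum_congr rfl fun y hy => by rw [← hν y hy, sum_mul]
    simp only [hleft, hright, sum_product, mul_sub, sum_sub_distrib]
  have hmass : ∑ q ∈ s ×ˢ t, κ q.1 q.2 = 1 := by
    rw [sum_product, sum_congr rfl hμ, hμ1]
  rw [hmean, ← sum_product' (f := fun x y => κ x y * (f x - f y) ^ 2)]
  exact (even_two.convexOn_pow : ConvexOn ℝ Set.univ (· ^ 2)).map_sum_le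
    (fun q hq => hκ q.1 (mem_product.1 hq).1 q.2 (mem_product.1 hq).2) hmass
    (fun _ _ => Set.mem_univ _)

end Dirichlet

section Variance

variable {Ω : Type*} [Fintype Ω]

theorem varOf_nonneg {μ : Ω → ℝ} (hμ : ∀ x, 0 ≤ μ x) (hμ1 : ∑ x, μ x = 1) (f : Ω → ℝ) :
    0 ≤ varOf μ f :=
  sub_nonneg.2 <| (even_two.convexOn_pow : ConvexOn ℝ Set.univ (· ^ 2)).map_sum_le
    (fun x _ => hμ x) hμ1 (fun _ _ => Set.mem_univ _)

variable {I : Type*} [Fintype I]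

theorem expec_mixture {π : Ω → ℝ} {w : I → ℝ} {μ : I → Ω → ℝ}
    (hπ : ∀ x, π x = ∑ i, w i * μ i x) (h : Ω → ℝ) :
    expec π h = ∑ i, w i * expec (μ i) h := by
  simp only [expec, hπ, sum_mul, mul_sum]
  rw [sum_comm]
  exact sum_congr rfl fun i _ => sum_congr rfl fun x _ => by ring

theorem varOf_mixture {π : Ω → ℝ} {w : I → ℝ} {μ : I → Ω → ℝ}
    (hπ : ∀ x, π x = ∑ i, w i * μ i x) (f : Ω → ℝ) :
    varOf π f = ∑ i, w i * varOf (μ i) f + varOf w (fun i => expec (μ i) f) := by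
  simp only [varOf, expec_mixture hπ, mul_sub, sum_sub_distrib]
  simp only [expec]
  ring

end Variance

theorem sum_add_sum_sum_le_sum_sum {ι : Type*} [Fintype ι] [DecidableEq ι] {d : ι → ℝ}
    {b T : ι → ι → ℝ} (hd : ∀ i, d i ≤ T i i) (hb : ∀ i j, i ≠ j → b i j ≤ T i j)
    (hbd : ∀ i, b i i = 0) :
    ∑ i, d i + ∑ i, ∑ j, b i j ≤ ∑ i, ∑ j, T i j := by
  rw [← sum_add_distrib]
  refine sum_le_sum fun i _ => ?_
  rw [← add_sum_erase univ (T i) (mem_univ i), ← add_sum_erase univ (b i) (mem_univ i), hbd,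
    zero_add]
  exact add_le_add (hd i) (sum_le_sum fun j hj => hb i j (ne_of_mem_erase hj).symm)

theorem min_mul_add_le_of_block_bounds {ι : Type*} [Fintype ι] [Nonempty ι] [DecidableEq ι]
    {w v l : ι → ℝ} {b T : ι → ι → ℝ} {V χ L : ℝ} (hw : ∀ i, 0 ≤ w i) (hv : ∀ i, 0 ≤ v i)
    (hV : 0 ≤ V) (hχ : 0 ≤ χ) (hdiag : ∀ i, 2 * (w i * (l i * v i)) ≤ T i i)
    (hoff : ∀ i j, i ≠ j → χ * b i j ≤ T i j) (hbd : ∀ i, b i i = 0)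
    (hgap : L * V ≤ 1 / 2 * ∑ i, ∑ j, b i j) :
    min (χ * L) (univ.inf' univ_nonempty l) * (∑ i, w i * v i + V) ≤
      1 / 2 * ∑ i, ∑ j, T i j := by
  set m := min (χ * L) (univ.inf' univ_nonempty l)
  have hblocks := sum_add_sum_sum_le_sum_sum hdiag hoff (by simp [hbd])
  simp only [← mul_sum] at hblocks
  have hχgap := mul_le_mul_of_nonneg_left hgap hχ
  have hwithin : ∑ i, m * (w i * v i) ≤ ∑ i, w i * (l i * v i) := sum_le_sum fun i _ => by
    have hm : m ≤ l i := (min_le_right _ _).trans (inf'_le _ (mem_univ i))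
    calc m * (w i * v i) = w i * (m * v i) := by ring
      _ ≤ w i * (l i * v i) :=
        mul_le_mul_of_nonneg_left (mul_le_mul_of_nonneg_right hm (hv i)) (hw i)
  have hacross : m * V ≤ χ * L * V := mul_le_mul_of_nonneg_right (min_le_left _ _) hV
  rw [mul_add, mul_sum]
  linarith

section Partition

variable {Ω I : Type*} [DecidableEq I] {π : Ω → ℝ} {Q : Ω → Ω → ℝ} {p : Ω → I}
  {pbar : I → ℝ} {cond : I → Ω → ℝ}

theorem cond_nonneg (hπ : ∀ x, 0 ≤ π x) (hpos : ∀ i, 0 ≤ pbar i)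
    (hcond : ∀ i x, cond i x = if p x = i then π x / pbar i else 0) (i : I) (x : Ω) :
    0 ≤ cond i x := by
  rw [hcond]
  split_ifs
  · exact div_nonneg (hπ x) (hpos i)
  · exact le_rfl

theorem eq_sum_mul_cond [Fintype I] (hpos : ∀ i, pbar i ≠ 0)
    (hcond : ∀ i x, cond i x = if p x = i then π x / pbar i else 0) (x : Ω) :
    π x = ∑ i, pbar i * cond i x := by
  simp only [hcond, mul_ite, mul_zero, sum_ite_eq, mem_univ, if_true]
  rw [mul_div_cancel₀ _ (hpos _)]

variable [Fintype Ω]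

theorem sum_filter_pos_of_surjective (hπ : ∀ x, 0 < π x) (hsurj : Function.Surjective p)
    (i : I) : 0 < ∑ x ∈ univ.filter (p · = i), π x := by
  obtain ⟨x, rfl⟩ := hsurj i
  exact sum_pos' (fun y _ => (hπ y).le) ⟨x, mem_filter.2 ⟨mem_univ x, rfl⟩, hπ x⟩

variable (π Q p) in
def blockEnergy (f : Ω → ℝ) (i j : I) : ℝ :=
  ∑ x ∈ univ.filter (p · = i), ∑ y ∈ univ.filter (p · = j), π x * Q x y * (f x - f y) ^ 2

variable (π Q p) in
theorem sum_sum_eq_sum_blockEnergy [Fintype I] (f : Ω → ℝ) :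
    ∑ x, ∑ y, π x * Q x y * (f x - f y) ^ 2 = ∑ i, ∑ j, blockEnergy π Q p f i j := by
  rw [← sum_fiberwise univ p]
  refine sum_congr rfl fun i _ => ?_
  calc _ = ∑ x ∈ univ.filter (p · = i), ∑ j, ∑ y ∈ univ.filter (p · = j),
        π x * Q x y * (f x - f y) ^ 2 :=
        sum_congr rfl fun x _ => (sum_fiberwise univ p _).symm
    _ = _ := sum_comm

theorem blockEnergy_nonneg (hπ : ∀ x, 0 ≤ π x) (hQoff : ∀ x y, x ≠ y → 0 ≤ Q x y)
    (f : Ω → ℝ) {i j : I} (hij : i ≠ j) : 0 ≤ blockEnergy π Q p f i j :=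
  sum_nonneg fun x hx => sum_nonneg fun y hy => by
    have hxy : x ≠ y := by
      rintro rfl
      exact hij ((mem_filter.1 hx).2.symm.trans (mem_filter.1 hy).2)
    exact mul_nonneg (mul_nonneg (hπ x) (hQoff x y hxy)) (sq_nonneg _)

theorem neg_restrictedForm_eq [DecidableEq Ω] (hrev : ∀ x y, π x * Q x y = π y * Q y x)
    {c : ℝ} {i : I} {μ : Ω → ℝ} (hμ : ∀ x, μ x = if p x = i then π x / c else 0)
    (f : Ω → ℝ) :
    -(∑ x, μ x * f x * ∑ y ∈ univ.filter (fun y => p y = i ∧ y ≠ x), Q x y * (f y - f x)) =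
      blockEnergy π Q p f i i / (2 * c) := by
  have hdiag : ∀ x, ∑ y ∈ univ.filter (fun y => p y = i ∧ y ≠ x), Q x y * (f y - f x) =
      ∑ y ∈ univ.filter (p · = i), Q x y * (f y - f x) := fun x => by
    rw [← filter_filter]
    exact sum_filter_of_ne fun y _ h => by rintro rfl; simp at h
  simp only [hdiag, hμ, ite_mul, zero_mul, ← sum_filter, ← sum_neg_distrib]
  have hform : ∑ x ∈ univ.filter (p · = i),
      -(π x / c * f x * ∑ y ∈ univ.filter (p · = i), Q x y * (f y - f x)) =
      ∑ x ∈ univ.filter (p · = i), ∑ y ∈ univ.filter (p · = i),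
        π x / c * Q x y * (f x * (f x - f y)) := by
    refine sum_congr rfl fun x _ => ?_
    rw [mul_sum, ← sum_neg_distrib]
    exact sum_congr rfl fun y _ => by ring
  rw [hform, sum_sum_mul_mul_sub_eq_half_sum_sq _ (fun x y => π x / c * Q x y)
    (fun x _ y _ => by simp only [div_mul_eq_mul_div, hrev x y])]
  simp only [blockEnergy, sum_div, mul_sum]
  exact sum_congr rfl fun x _ => sum_congr rfl fun y _ => by ring

theorem sum_cond_mul_eq (hcond : ∀ i x, cond i x = if p x = i then π x / pbar i else 0)
    (i : I) (h : Ω → ℝ) :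
    ∑ x, cond i x * h x = ∑ x ∈ univ.filter (p · = i), cond i x * h x :=
  (sum_filter_of_ne fun x _ hx => by
    by_contra hpx
    simp [hcond, hpx] at hx).symm

theorem sum_filter_cond_eq_one (hpbar : ∀ i, pbar i = ∑ x ∈ univ.filter (p · = i), π x)
    (hpos : ∀ i, pbar i ≠ 0) (hcond : ∀ i x, cond i x = if p x = i then π x / pbar i else 0)
    (i : I) : ∑ x ∈ univ.filter (p · = i), cond i x = 1 := by
  rw [sum_congr rfl fun x hx => (hcond i x).trans (if_pos (mem_filter.1 hx).2), ← sum_div,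
    ← hpbar, div_self (hpos i)]

theorem sum_cond_eq_one (hpbar : ∀ i, pbar i = ∑ x ∈ univ.filter (p · = i), π x)
    (hpos : ∀ i, pbar i ≠ 0) (hcond : ∀ i x, cond i x = if p x = i then π x / pbar i else 0)
    (i : I) : ∑ x, cond i x = 1 := by
  simpa using (sum_cond_mul_eq hcond i 1).trans
    (by simpa using sum_filter_cond_eq_one hpbar hpos hcond i)

theorem projection_reversible (hrev : ∀ x y, π x * Q x y = π y * Q y x)
    (hpos : ∀ i, pbar i ≠ 0) {Qbar : I → I → ℝ}
    (hQbaroff : ∀ i j, i ≠ j → Qbar i j =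
      (1 / pbar i) * ∑ x ∈ univ.filter (p · = i), ∑ y ∈ univ.filter (p · = j), π x * Q x y)
    (i j : I) : pbar i * Qbar i j = pbar j * Qbar j i := by
  rcases eq_or_ne i j with rfl | hij
  · rfl
  have hflow : ∀ a b, a ≠ b → pbar a * Qbar a b =
      ∑ x ∈ univ.filter (p · = a), ∑ y ∈ univ.filter (p · = b), π x * Q x y := fun a b hab => by
    rw [hQbaroff a b hab, ← mul_assoc, mul_one_div_cancel (hpos a), one_mul]
  rw [hflow i j hij, hflow j i hij.symm, sum_comm]
  exact sum_congr rfl fun y _ => sum_congr rfl fun x _ => hrev x y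

theorem mul_projection_le_blockEnergy (hπ : ∀ x, 0 ≤ π x) (hQoff : ∀ x y, x ≠ y → 0 ≤ Q x y)
    (hpbar : ∀ i, pbar i = ∑ x ∈ univ.filter (p · = i), π x) (hpos : ∀ i, 0 < pbar i)
    (hcond : ∀ i x, cond i x = if p x = i then π x / pbar i else 0)
    {Qbar : I → I → ℝ} (κ : I → I → Ω → Ω → ℝ) (hκ : ∀ i j x y, 0 ≤ κ i j x y)
    (hmarg1 : ∀ i j, i ≠ j → 0 < Qbar i j → ∀ x, p x = i →
      ∑ y ∈ univ.filter (p · = j), κ i j x y = cond i x)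
    (hmarg2 : ∀ i j, i ≠ j → 0 < Qbar i j → ∀ y, p y = j →
      ∑ x ∈ univ.filter (p · = i), κ i j x y = cond j y)
    {χ : ℝ} (hχ : 0 ≤ χ)
    (hχle : ∀ i j x y, i ≠ j → p x = i → p y = j → 0 < Qbar i j →
      χ * (pbar i * Qbar i j * κ i j x y) ≤ π x * Q x y)
    (f : Ω → ℝ) {i j : I} (hij : i ≠ j) :
    χ * (pbar i * Qbar i j * (expec (cond i) f - expec (cond j) f) ^ 2) ≤
      blockEnergy π Q p f i j := by
  rcases lt_or_ge 0 (Qbar i j) with hq | hq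
  · have hJensen := sq_sub_le_sum_of_coupling _ _ (cond i) (cond j) (κ i j)
      (fun x _ y _ => hκ i j x y) (fun x hx => hmarg1 i j hij hq x (mem_filter.1 hx).2)
      (fun y hy => hmarg2 i j hij hq y (mem_filter.1 hy).2)
      (sum_filter_cond_eq_one hpbar (fun i => (hpos i).ne') hcond i) f
    rw [expec, expec, sum_cond_mul_eq hcond, sum_cond_mul_eq hcond]
    calc _ = χ * pbar i * Qbar i j * (∑ x ∈ univ.filter (p · = i), cond i x * f x -
          ∑ y ∈ univ.filter (p · = j), cond j y * f y) ^ 2 := by ring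
      _ ≤ χ * pbar i * Qbar i j * ∑ x ∈ univ.filter (p · = i), ∑ y ∈ univ.filter (p · = j),
          κ i j x y * (f x - f y) ^ 2 := by
        have := (hpos i).le
        gcongr
      _ ≤ _ := by
        simp only [blockEnergy, mul_sum]
        refine sum_le_sum fun x hx => sum_le_sum fun y hy => ?_
        have hxy := hχle i j x y hij (mem_filter.1 hx).2 (mem_filter.1 hy).2 hq
        calc _ = χ * (pbar i * Qbar i j * κ i j x y) * (f x - f y) ^ 2 := by ring
          _ ≤ _ := by gcongr
  · calc _ ≤ 0 := mul_nonpos_of_nonneg_of_nonpos hχ <| mul_nonpos_of_nonpos_of_nonneg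
          (mul_nonpos_of_nonneg_of_nonpos (hpos i).le hq) (sq_nonneg _)
      _ ≤ _ := blockEnergy_nonneg hπ hQoff f hij

end Partition

/-- Poincaré case of the recursive decomposition lemma (Lemma 2.1):
if the projection chain satisfies a Poincaré inequality with constant `λbar`, each
restriction chain with constant `λlo i`, and the couplings have quality `χ`, then `Q`
satisfies a Poincaré inequality with constant `min (χ·λbar) (min_i λlo i)`. -/
theorem decomposition_poincare {Ω I : Type*} [Fintype Ω] [Fintype I] [Nonempty I]
    [DecidableEq Ω] [DecidableEq I]
    (π : Ω → ℝ) (Q : Ω → Ω → ℝ) (p : Ω → I)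
    (hπ : ∀ x, 0 < π x) (hπ1 : ∑ x, π x = 1)
    (hQoff : ∀ x y, x ≠ y → 0 ≤ Q x y)
    (hQrow : ∀ x, ∑ y, Q x y = 0)
    (hrev : ∀ x y, π x * Q x y = π y * Q y x)
    (hsurj : Function.Surjective p)
    -- projection chain
    (pbar : I → ℝ) (hpbar : ∀ i, pbar i = ∑ x ∈ univ.filter (fun x => p x = i), π x)
    (Qbar : I → I → ℝ)
    (hQbaroff : ∀ i j, i ≠ j → Qbar i j =
      (1 / pbar i) * ∑ x ∈ univ.filter (fun x => p x = i),
        ∑ y ∈ univ.filter (fun y => p y = j), π x * Q x y)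
    (hQbarrow : ∀ i, ∑ j, Qbar i j = 0)
    -- conditional measures
    (cond : I → Ω → ℝ)
    (hcond : ∀ i x, cond i x = if p x = i then π x / pbar i else 0)
    -- couplings and their quality χ
    (κ : I → I → Ω → Ω → ℝ) (hκ : ∀ i j x y, 0 ≤ κ i j x y)
    (hmarg1 : ∀ i j, i ≠ j → 0 < Qbar i j → ∀ x, p x = i →
      ∑ y ∈ univ.filter (fun y => p y = j), κ i j x y = cond i x)
    (hmarg2 : ∀ i j, i ≠ j → 0 < Qbar i j → ∀ y, p y = j →
      ∑ x ∈ univ.filter (fun x => p x = i), κ i j x y = cond j y)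
    (χ : ℝ) (hχ : 0 ≤ χ)
    (hχle : ∀ i j x y, i ≠ j → p x = i → p y = j → 0 < Qbar i j →
      χ * (pbar i * Qbar i j * κ i j x y) ≤ π x * Q x y)
    -- Poincaré inequalities for the projection and restriction chains
    (lbar : ℝ)
    (hproj : ∀ g : I → ℝ,
      -(∑ i, pbar i * g i * ∑ j, Qbar i j * g j) ≥ lbar * varOf pbar g)
    (llo : I → ℝ)
    (hres : ∀ i, ∀ f : Ω → ℝ,
      -(∑ x, cond i x * f x *
          ∑ y ∈ univ.filter (fun y => p y = i ∧ y ≠ x), Q x y * (f y - f x)) ≥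
        llo i * varOf (cond i) f) :
    ∀ f : Ω → ℝ,
      -(∑ x, π x * f x * ∑ y, Q x y * f y) ≥
        min (χ * lbar) (Finset.univ.inf' Finset.univ_nonempty llo) * varOf π f := by
  intro f
  have hpos : ∀ i, 0 < pbar i := fun i => hpbar i ▸ sum_filter_pos_of_surjective hπ hsurj i
  have hwithin : ∀ i, 2 * (pbar i * (llo i * varOf (cond i) f)) ≤ blockEnergy π Q p f i i := by
    intro i
    have h := hres i f
    rw [neg_restrictedForm_eq hrev (hcond i), ge_iff_le,
      le_div_iff₀ (mul_pos two_pos (hpos i))] at h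
    linarith
  have hgap : ∀ g : I → ℝ,
      lbar * varOf pbar g ≤ 1 / 2 * ∑ i, ∑ j, pbar i * Qbar i j * (g i - g j) ^ 2 := by
    intro g
    rw [← neg_sum_mul_sum_eq_half_sum_sq pbar Qbar hQbarrow
      (projection_reversible hrev (fun i => (hpos i).ne') hQbaroff)]
    exact hproj g
  have hpbar1 : ∑ i, pbar i = 1 := by simp only [hpbar]; rw [sum_fiberwise, hπ1]
  rw [neg_sum_mul_sum_eq_half_sum_sq π Q hQrow hrev, sum_sum_eq_sum_blockEnergy π Q p,
    varOf_mixture (eq_sum_mul_cond (fun i => (hpos i).ne') hcond), ge_iff_le]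
  exact min_mul_add_le_of_block_bounds (fun i => (hpos i).le)
    (fun i => varOf_nonneg (cond_nonneg (fun x => (hπ x).le) (fun i => (hpos i).le) hcond i)
      (sum_cond_eq_one hpbar (fun i => (hpos i).ne') hcond i) f)
    (varOf_nonneg (fun i => (hpos i).le) hpbar1 _) hχ hwithin
    (fun i j => mul_projection_le_blockEnergy (fun x => (hπ x).le) hQoff hpbar hpos hcond κ hκ
      hmarg1 hmarg2 hχ hχle f) (by simp) (hgap _)
end
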